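/- A vector (c_1,…,c_d) of positive integers is the clique vector of a k-connected threshold graph if and only if the vector (b_1,…,b_d) defined by Σ_{i=1}^d b_i·x^{i-1} = Σ_{i=1}^d c_i·(x−1)^{i-1} has all components positive and b_1 = b_2 = … = b_k = 1. -/

import Mathlib

open Finset

/-- Number of cliques of `G` with exactly `i` vertices. -/
noncomputable def cliqueCount {V : Type*} (G : SimpleGraph V) (i : ℕ) : ℕ :=
  {s : Finset V | G.IsNClique i s}.ncard

/-- Clique number: the largest cardinality of a clique of `G`. -/
noncomputable def cliqueNum {V : Type*} (G : SimpleGraph V) : ℕ :=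
  sSup {i : ℕ | ∃ s : Finset V, G.IsNClique i s}

/-- `G` is `k`-connected: it has at least `k` vertices and removing any set of
fewer than `k` vertices leaves a connected graph. -/
def KConnected {V : Type*} [Fintype V] (G : SimpleGraph V) (k : ℕ) : Prop :=
  k ≤ Fintype.card V ∧
    ∀ s : Finset V, s.card < k → (G.induce ((↑s : Set V)ᶜ)).Connected

/-- The connectivity number `κ(G)`: the largest `k` such that `G` is `k`-connected. -/
noncomputable def connectivityNum {V : Type*} [Fintype V] (G : SimpleGraph V) : ℕ :=
  sSup {k : ℕ | KConnected G k}

/-- A graph is chordal if every cycle of length at least four has a chord. -/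
def IsChordal {V : Type*} (G : SimpleGraph V) : Prop :=
  ∀ (v : V) (c : G.Walk v v), c.IsCycle → 4 ≤ c.length →
    ∃ u w, u ∈ c.support ∧ w ∈ c.support ∧ G.Adj u w ∧ s(u, w) ∉ c.edges

/-- The threshold graph built from a word in the alphabet `{S, D}` (here
`true` = `S`, `false` = `D`), where the leftmost letter is the last operation
performed.  Vertex `i` corresponds to the `i`-th letter; two vertices are
adjacent iff the earlier (smaller-index, i.e. later-added) one is a dominating
vertex. -/
def thresholdGraph (w : List Bool) : SimpleGraph (Fin w.length) where
  Adj i j := i ≠ j ∧ w.get (min i j) = true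
  symm := ⟨fun i j h => ⟨h.1.symm, by rw [min_comm]; exact h.2⟩⟩
  loopless := ⟨fun i h => h.1 rfl⟩

/-- A valid threshold word: the final (rightmost) letter, i.e. the first
operation performed, is `S`. -/
def IsThresholdWord (w : List Bool) : Prop := w ≠ [] → w.getLast? = some true

/-- A graph is a threshold graph if it is isomorphic to the graph of some
threshold word. -/
def IsThresholdGraph {V : Type*} (G : SimpleGraph V) : Prop :=
  ∃ w : List Bool, IsThresholdWord w ∧ Nonempty (G ≃g thresholdGraph w)

/-- An abstract simplicial complex on vertex set `V`. -/
structure AbsCx (V : Type*) where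
  faces : Set (Finset V)
  down_closed : ∀ ⦃s t : Finset V⦄, s ∈ faces → t ⊆ s → t ∈ faces

/-- The clique complex of a graph: its faces are the cliques. -/
def cliqueComplex {V : Type*} (G : SimpleGraph V) : AbsCx V :=
  ⟨{s | G.IsClique (↑s : Set V)}, fun s t hs hts => hs.subset (Finset.coe_subset.mpr hts)⟩

/-- The induced subcomplex on a vertex subset `W`. -/
def AbsCx.restrict {V : Type*} (K : AbsCx V) (W : Set V) : AbsCx V :=
  ⟨{s | s ∈ K.faces ∧ (↑s : Set V) ⊆ W},
   fun s t hs hts =>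
     ⟨K.down_closed hs.1 hts, le_trans (Finset.coe_subset.mpr hts) hs.2⟩⟩

/-- A complex is flag if every minimal non-face has exactly two elements. -/
def AbsCx.IsFlag {V : Type*} (K : AbsCx V) : Prop :=
  ∀ s : Finset V, s ∉ K.faces → (∀ t ⊂ s, t ∈ K.faces) → s.card = 2

/-- A complex on `Fin n` is shifted if exchanging a vertex of a face by a
smaller vertex not in the face again yields a face. -/
def AbsCx.IsShifted {n : ℕ} (K : AbsCx (Fin n)) : Prop :=
  ∀ s ∈ K.faces, ∀ i ∈ s, ∀ j, j ∉ s → j < i → insert j (s.erase i) ∈ K.faces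

/-- Faces of (integer) dimension `d`, i.e. of cardinality `d + 1`. -/
def AbsCx.dimFaces {V : Type*} (K : AbsCx V) (d : ℤ) : Type _ :=
  {s : Finset V // s ∈ K.faces ∧ (s.card : ℤ) = d + 1}

/-- The simplicial (augmented) boundary map of a complex, on `d`-dimensional
chains with coefficients in `𝕜`. -/
noncomputable def chainBoundary {V : Type*} [LinearOrder V] (K : AbsCx V)
    (𝕜 : Type*) [Field 𝕜] (d : ℤ) :
    (K.dimFaces d →₀ 𝕜) →ₗ[𝕜] (K.dimFaces (d - 1) →₀ 𝕜) :=
  Finsupp.lsum 𝕜 fun F =>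
    LinearMap.toSpanSingleton 𝕜 _
      (∑ v ∈ F.1.attach,
        ((-1 : 𝕜) ^ (F.1.filter (fun x => x < v.1)).card) •
          Finsupp.single
            (⟨F.1.erase v.1,
              K.down_closed F.2.1 (Finset.erase_subset _ _),
              by
                obtain ⟨hf, hc⟩ := F.2
                have h1 : 1 ≤ F.1.card := Finset.card_pos.mpr ⟨v.1, v.2⟩
                rw [Finset.card_erase_of_mem v.2, Nat.cast_sub h1]
                omega⟩ : K.dimFaces (d - 1))
            (1 : 𝕜))

/-- The dimension of the `d`-th reduced simplicial homology of `K` with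
coefficients in `𝕜` (computed as `dim ker ∂_d − dim im ∂_{d+1}`). -/
noncomputable def AbsCx.homDim {V : Type*} [LinearOrder V] (𝕜 : Type*) [Field 𝕜]
    (K : AbsCx V) (d : ℤ) : ℕ :=
  Module.finrank 𝕜 (LinearMap.ker (chainBoundary K 𝕜 d)) -
    Module.finrank 𝕜 (LinearMap.range (chainBoundary K 𝕜 (d + 1)))

/-- The graded Betti numbers `β_{i,j}` of the Stanley–Reisner ring `𝕜[K]`,
given by Hochster's formula: `β_{i,j} = Σ_{|W| = j} dim_𝕜 H̃_{j-i-1}(K_W)`. -/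
noncomputable def srBetti (𝕜 : Type*) [Field 𝕜] {n : ℕ} (K : AbsCx (Fin n))
    (i j : ℕ) : ℕ :=
  ∑ W ∈ Finset.powersetCard j (Finset.univ : Finset (Fin n)),
    AbsCx.homDim 𝕜 (K.restrict (↑W : Set (Fin n))) ((j : ℤ) - i - 1)

/-- The projective dimension of the Stanley–Reisner ring `𝕜[K]` over the
polynomial ring: the largest homological degree with a nonzero Betti number. -/
noncomputable def srProjDim (𝕜 : Type*) [Field 𝕜] {n : ℕ} (K : AbsCx (Fin n)) : ℕ :=
  sSup {i : ℕ | ∃ j : ℕ, srBetti 𝕜 K i j ≠ 0}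

/-- The depth of the Stanley–Reisner ring `𝕜[K]`, via the
Auslander–Buchsbaum formula `depth = n − projdim`. -/
noncomputable def srDepth (𝕜 : Type*) [Field 𝕜] {n : ℕ} (K : AbsCx (Fin n)) : ℕ :=
  n - srProjDim 𝕜 K

/-- The lengths of the blocks obtained by splitting a threshold word
immediately after each `S` (= `true`); the `b`-vector of the word. -/
def blocks : List Bool → List ℕ
  | [] => []
  | true :: rest => 1 :: blocks rest
  | false :: rest =>
    match blocks rest with
    | [] => []
    | b :: bs => (b + 1) :: bs

/-- One plus the dimension of a complex: the largest cardinality of a face. -/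
noncomputable def AbsCx.dimPlusOne {V : Type*} (K : AbsCx V) : ℕ :=
  sSup {c : ℕ | ∃ s ∈ K.faces, s.card = c}

/-- `K` is Cohen–Macaulay over `𝕜` iff the depth of `𝕜[K]` equals its Krull
dimension `dim K + 1`. -/
def IsCohenMacaulay (𝕜 : Type*) [Field 𝕜] {n : ℕ} (K : AbsCx (Fin n)) : Prop :=
  srDepth 𝕜 K = K.dimPlusOne

/-- The Alexander dual complex. -/
def AbsCx.dual {n : ℕ} (K : AbsCx (Fin n)) : AbsCx (Fin n) :=
  ⟨{s | Finset.univ \ s ∉ K.faces},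
   fun s t hs hts h => hs (K.down_closed h (Finset.sdiff_subset_sdiff (le_refl _) hts))⟩

/-- The number of faces of `K` with exactly `i` vertices (the `f`-vector). -/
noncomputable def AbsCx.faceCount {V : Type*} (K : AbsCx V) (i : ℕ) : ℕ :=
  {s ∈ K.faces | s.card = i}.ncard

/-!
Number the vertices of the threshold graph of a word by the positions of its letters, the last
added vertex first, and let the rank `r j = sCount w j` of a position be the number of `S` letters
before it. A vertex set is a clique iff all its members except the largest are `S` letters, so the
cliques of size `m + 1` with largest vertex `j` are the `m`-subsets of the `S` letters before `j`.
Hence `c_{m+1} = ∑ⱼ (r j).choose m`, the binomial theorem turns `∑ₘ c_{m+1} (x - 1)^m` into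
`∑ⱼ x^(r j)`, and `b_i` is the number of positions of rank `i`. The clique number is the number of
`S` letters and every smaller rank occurs, so all `b_i` are positive. The graph is `k`-connected
iff its first `k` letters are `S`: such a vertex dominates, and a `D` at a position `j < k` is
isolated once the fewer than `k` letters `S` before it are removed. This happens iff the ranks
`0, …, k - 1` occur once each. Conversely, the word made of the blocks `D^(b_i - 1) S` realises
every positive `b`.
-/

open Polynomial

section Iso

variable {V W : Type*} {G : SimpleGraph V} {H : SimpleGraph W}

lemma SimpleGraph.Iso.isNClique_map_iff (e : G ≃g H) {n : ℕ} {s : Finset V} :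
    H.IsNClique n (s.map e.toEquiv.toEmbedding) ↔ G.IsNClique n s := by
  rw [isNClique_iff, isNClique_iff, coe_map, card_map, IsClique,
    e.toEquiv.toEmbedding.injective.injOn.pairwise_image]
  simp [IsClique, Set.Pairwise, Function.onFun, e.map_adj_iff]

lemma SimpleGraph.Iso.cliqueCount_eq (e : G ≃g H) (n : ℕ) : cliqueCount G n = cliqueCount H n := by
  rw [cliqueCount, cliqueCount, ← Set.ncard_image_of_injective _ e.toEquiv.finsetCongr.injective,
    Equiv.image_eq_preimage_symm]
  congr 1
  ext t
  exact e.symm.isNClique_map_iff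

lemma SimpleGraph.Iso.cliqueNum_eq (e : G ≃g H) : _root_.cliqueNum G = _root_.cliqueNum H := by
  refine congr_arg sSup (Set.ext fun n ↦ ⟨?_, ?_⟩)
  · exact fun ⟨s, hs⟩ ↦ ⟨_, e.isNClique_map_iff.2 hs⟩
  · exact fun ⟨t, ht⟩ ↦ ⟨_, e.symm.isNClique_map_iff.2 ht⟩

lemma KConnected.of_iso [Fintype V] [Fintype W] {k : ℕ} (h : KConnected G k) (e : G ≃g H) :
    KConnected H k := by
  classical
  refine ⟨Fintype.card_congr e.toEquiv ▸ h.1, fun s hs ↦ ?_⟩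
  have hs' : #(s.map e.symm.toEquiv.toEmbedding) < k := by rwa [card_map]
  have hmaps : Set.MapsTo e.toHom (s.map e.symm.toEquiv.toEmbedding : Set V)ᶜ (s : Set W)ᶜ :=
    fun v hv hev ↦ hv (mem_map.2 ⟨_, hev, e.symm_apply_apply v⟩)
  refine (h.2 _ hs').map (SimpleGraph.induceHom e.toHom hmaps) fun ⟨y, hy⟩ ↦ ?_
  exact ⟨⟨e.symm y, by simpa using hy⟩, Subtype.ext (e.apply_symm_apply y)⟩

end Iso

lemma cliqueCount_eq_card_cliqueFinset {V : Type*} [Fintype V] [DecidableEq V]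
    (G : SimpleGraph V) [DecidableRel G.Adj] (n : ℕ) : cliqueCount G n = #(G.cliqueFinset n) := by
  rw [cliqueCount, ← Set.ncard_coe_finset, SimpleGraph.coe_cliqueFinset]
  rfl

section Word

variable (w : List Bool)

def sPrefix (n : ℕ) : Finset (Fin w.length) := {p | (p : ℕ) < n ∧ w.get p = true}

def sCount (n : ℕ) : ℕ := #(sPrefix w n)

lemma sCount_le (n : ℕ) : sCount w n ≤ n :=
  (card_le_card (monotone_filter_right _ fun _ _ ↦ And.left)).trans
    (Fin.card_filter_val_lt.trans_le (min_le_right _ _))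

variable {w}

@[simp] lemma sCount_zero : sCount w 0 = 0 := by simp [sCount, sPrefix]

lemma sCount_cons_succ (x : Bool) (n : ℕ) :
    sCount (x :: w) (n + 1) = x.toNat + sCount w n := by
  cases x <;> simp [sCount, sPrefix, Fin.card_filter_univ_succ']

lemma notMem_sPrefix_self (j : Fin w.length) : j ∉ sPrefix w j :=
  fun hj ↦ lt_irrefl _ (mem_filter.1 hj).2.1

lemma exists_sCount_eq {i : ℕ} (hi : i < sCount w w.length) :
    ∃ j : Fin w.length, sCount w j = i := by
  induction w generalizing i with
  | nil => simp at hi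
  | cons x w ih =>
    rcases i with _ | i
    · exact ⟨0, by simp⟩
    rw [List.length_cons, sCount_cons_succ] at hi
    cases x
    · obtain ⟨j, hj⟩ := ih (i := i + 1) (by simpa using hi)
      exact ⟨j.succ, by simpa [sCount_cons_succ] using hj⟩
    · obtain ⟨j, hj⟩ := ih (i := i) (by simp at hi; omega)
      exact ⟨j.succ, by simp [sCount_cons_succ, hj, add_comm]⟩

lemma IsThresholdWord.exists_le_get_eq_true (hw : IsThresholdWord w) (j : Fin w.length) :
    ∃ q, j ≤ q ∧ w.get q = true := by
  have hj := j.2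
  have hlast := hw (List.ne_nil_of_length_pos j.pos)
  rw [List.getLast?_eq_getElem?, List.getElem?_eq_getElem (by omega), Option.some_inj] at hlast
  exact ⟨⟨w.length - 1, by omega⟩, Fin.le_def.2 (by simp only; omega), hlast⟩

lemma sCount_lt_sCount_length (hw : IsThresholdWord w) (j : Fin w.length) :
    sCount w j < sCount w w.length := by
  obtain ⟨q, hjq, hq⟩ := hw.exists_le_get_eq_true j
  refine card_lt_card ((ssubset_iff_of_subset ?_).2 ⟨q, ?_, ?_⟩)
  · exact monotone_filter_right _ fun _ _ h ↦ ⟨h.1.trans j.2, h.2⟩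
  · exact mem_filter.2 ⟨mem_univ _, q.2, hq⟩
  · simpa [sPrefix] using fun h ↦ absurd hjq (not_le.2 h)

lemma exists_le_get_eq_true_sCount_eq (hw : IsThresholdWord w) (j : Fin w.length) :
    ∃ q, j ≤ q ∧ w.get q = true ∧ sCount w q = sCount w j := by
  have hne : ({p | j ≤ p ∧ w.get p = true} : Finset _).Nonempty := by
    obtain ⟨q, hq⟩ := hw.exists_le_get_eq_true j
    exact ⟨q, mem_filter.2 ⟨mem_univ _, hq⟩⟩
  obtain ⟨hjq, hq⟩ := (mem_filter.1 (min'_mem _ hne)).2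
  refine ⟨_, hjq, hq, congr_arg card (filter_congr fun p _ ↦ ⟨fun h ↦ ⟨?_, h.2⟩, ?_⟩)⟩
  · by_contra! hjp
    exact absurd (min'_le _ p (mem_filter.2 ⟨mem_univ _, hjp, h.2⟩)) (not_le.2 h.1)
  · exact fun h ↦ ⟨h.1.trans_le hjq, h.2⟩

end Word

section ThresholdGraph

variable {w : List Bool}

lemma isClique_thresholdGraph_iff {s : Set (Fin w.length)} :
    (thresholdGraph w).IsClique s ↔ ∀ p ∈ s, ∀ q ∈ s, p < q → w.get p = true := by
  refine ⟨fun h p hp q hq hpq ↦ ?_, fun h p hp q hq hpq ↦ ?_⟩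
  · simpa [min_eq_left hpq.le] using (h hp hq hpq.ne).2
  · rcases hpq.lt_or_gt with hlt | hlt
    · exact ⟨hpq, by simpa [min_eq_left hlt.le] using h p hp q hq hlt⟩
    · exact ⟨hpq, by simpa [min_eq_right hlt.le] using h q hq p hp hlt⟩

lemma erase_max'_subset_sPrefix {s : Finset (Fin w.length)}
    (hs : (thresholdGraph w).IsClique (s : Set (Fin w.length))) (hne : s.Nonempty) :
    s.erase (s.max' hne) ⊆ sPrefix w (s.max' hne) := fun p hp ↦ by
  obtain ⟨hpm, hps⟩ := mem_erase.1 hp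
  have hlt := lt_of_le_of_ne (le_max' s p hps) hpm
  exact mem_filter.2 ⟨mem_univ _, hlt,
    isClique_thresholdGraph_iff.1 hs p hps _ (max'_mem s hne) hlt⟩

lemma le_of_mem_insert_sPrefix {j p : Fin w.length} {t : Finset (Fin w.length)}
    (ht : t ⊆ sPrefix w j) (hp : p ∈ insert j t) : p ≤ j := by
  rcases mem_insert.1 hp with rfl | hp
  exacts [le_rfl, (mem_filter.1 (ht hp)).2.1.le]

lemma isNClique_insert_of_mem_powersetCard_sPrefix {j : Fin w.length} {m : ℕ}
    {t : Finset (Fin w.length)} (ht : t ∈ powersetCard m (sPrefix w j)) :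
    (thresholdGraph w).IsNClique (m + 1) (insert j t) := by
  obtain ⟨hts, rfl⟩ := mem_powersetCard.1 ht
  refine ⟨isClique_thresholdGraph_iff.2 fun p hp q hq hpq ↦ ?_,
    card_insert_of_notMem (notMem_mono hts (notMem_sPrefix_self j))⟩
  have hpt : p ∈ t := (mem_insert.1 (mem_coe.1 hp)).resolve_left
    (by rintro rfl; exact not_le.2 hpq (le_of_mem_insert_sPrefix hts hq))
  exact (mem_filter.1 (hts hpt)).2.2

lemma cliqueCount_thresholdGraph_succ (m : ℕ) :
    cliqueCount (thresholdGraph w) (m + 1) = ∑ j : Fin w.length, (sCount w j).choose m := by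
  classical
  simp_rw [cliqueCount_eq_card_cliqueFinset, sCount, ← card_powersetCard, ← card_sigma]
  symm
  refine card_nbij (fun x ↦ insert x.1 x.2) (fun x hx ↦ ?_) ?_ fun s hs ↦ ?_
  · exact SimpleGraph.mem_cliqueFinset_iff.2
      (isNClique_insert_of_mem_powersetCard_sPrefix (mem_sigma.1 hx).2)
  · rintro ⟨j, t⟩ hjt ⟨j', t'⟩ hjt' (h : insert j t = insert j' t')
    replace hjt := (mem_powersetCard.1 (mem_sigma.1 hjt).2).1
    replace hjt' := (mem_powersetCard.1 (mem_sigma.1 hjt').2).1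
    obtain rfl : j = j' := le_antisymm (le_of_mem_insert_sPrefix hjt' (h ▸ mem_insert_self j t))
      (le_of_mem_insert_sPrefix hjt (h ▸ mem_insert_self j' t'))
    have ht := congr_arg (·.erase j) h
    simp only [erase_insert (notMem_mono hjt (notMem_sPrefix_self j)),
      erase_insert (notMem_mono hjt' (notMem_sPrefix_self j))] at ht
    rw [ht]
  · have hs := SimpleGraph.mem_cliqueFinset_iff.1 hs
    have hne : s.Nonempty := card_pos.1 (hs.card_eq ▸ m.succ_pos)
    refine ⟨⟨s.max' hne, s.erase (s.max' hne)⟩, mem_sigma.2 ⟨mem_univ _, mem_powersetCard.2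
      ⟨erase_max'_subset_sPrefix hs.isClique hne, ?_⟩⟩, insert_erase (max'_mem s hne)⟩
    rw [card_erase_of_mem (max'_mem s hne), hs.card_eq, Nat.add_sub_cancel]

lemma cliqueNum_thresholdGraph (hw : IsThresholdWord w) :
    cliqueNum (thresholdGraph w) = sCount w w.length := by
  change (thresholdGraph w).cliqueNum = _
  refine le_antisymm ?_ ?_
  · obtain ⟨s, hs⟩ := (thresholdGraph w).exists_isNClique_cliqueNum
    rw [← hs.card_eq]
    rcases s.eq_empty_or_nonempty with rfl | hne
    · simp
    calc #s = #(s.erase (s.max' hne)) + 1 := (card_erase_add_one (max'_mem s hne)).symm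
      _ ≤ sCount w (s.max' hne) + 1 :=
          Nat.succ_le_succ (card_le_card (erase_max'_subset_sPrefix hs.isClique hne))
      _ ≤ sCount w w.length := sCount_lt_sCount_length hw _
  · exact SimpleGraph.IsClique.card_le_cliqueNum (t := sPrefix w w.length)
      (tc := isClique_thresholdGraph_iff.2 fun p hp _ _ _ ↦ (mem_filter.1 hp).2.2)

end ThresholdGraph

section Connectivity

variable {w : List Bool} {k : ℕ}

lemma kConnected_thresholdGraph_of_forall_get (hk : k ≤ w.length)
    (hS : ∀ p : Fin w.length, (p : ℕ) < k → w.get p = true) :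
    KConnected (thresholdGraph w) k := by
  refine ⟨by simpa using hk, fun s hs ↦ ?_⟩
  obtain ⟨u, hu, hus⟩ : ∃ u : Fin w.length, (u : ℕ) < k ∧ u ∉ s := by
    by_contra! h
    have : #{u : Fin w.length | (u : ℕ) < k} ≤ #s := card_le_card fun u hu ↦ h u (mem_filter.1 hu).2
    rw [Fin.card_filter_val_lt, min_eq_right hk] at this
    omega
  refine SimpleGraph.Connected.of_isUniversal (v := ⟨u, hus⟩) fun v huv ↦ ?_
  exact ⟨fun h ↦ huv (Subtype.ext h), hS _ ((Fin.le_def.1 (min_le_left _ _)).trans_lt hu)⟩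

lemma get_eq_true_of_kConnected (hw : IsThresholdWord w) (h : KConnected (thresholdGraph w) k)
    (j : Fin w.length) (hj : (j : ℕ) < k) : w.get j = true := by
  by_contra hjD
  obtain ⟨q, hjq, hq⟩ := hw.exists_le_get_eq_true j
  have hsq : q ∉ sPrefix w j := fun hq' ↦ not_le.2 (mem_filter.1 hq').2.1 hjq
  have hcon := h.2 (sPrefix w j) ((sCount_le w j).trans_lt hj)
  refine SimpleGraph.not_reachable_of_neighborSet_left_eq_empty (u := ⟨j, notMem_sPrefix_self j⟩)
    (v := ⟨q, hsq⟩) (fun h ↦ ?_) ?_ (hcon.preconnected _ _)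
  · rw [Subtype.mk.inj h] at hjD
    exact hjD hq
  · refine Set.eq_empty_of_forall_notMem fun ⟨z, hz⟩ ⟨hjz, hmin⟩ ↦ ?_
    have hzj : z ≠ j := fun h ↦ hjz (by simp [h])
    rcases hzj.lt_or_gt with hzj | hzj
    · exact hz (mem_filter.2 ⟨mem_univ _, hzj, by simpa [min_eq_right hzj.le] using hmin⟩)
    · exact hjD (by simpa [min_eq_left hzj.le] using hmin)

lemma min_le_sCount (hk : k ≤ w.length) (hS : ∀ p : Fin w.length, (p : ℕ) < k → w.get p = true)
    (n : ℕ) : min n k ≤ sCount w n := by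
  calc min n k = #{p : Fin w.length | (p : ℕ) < min n k} := by
        rw [Fin.card_filter_val_lt, min_eq_right ((min_le_right _ _).trans hk)]
    _ ≤ sCount w n := card_le_card fun p hp ↦ by
        obtain ⟨hpn, hpk⟩ := lt_min_iff.1 (mem_filter.1 hp).2
        exact mem_filter.2 ⟨mem_univ _, hpn, hS p hpk⟩

lemma card_sCount_fiber_eq_one (hk : k ≤ w.length)
    (hS : ∀ p : Fin w.length, (p : ℕ) < k → w.get p = true) {i : ℕ} (hi : i < k) :
    #{j : Fin w.length | sCount w j = i} = 1 := by
  refine card_eq_one.2 ⟨⟨i, hi.trans_le hk⟩, ext fun j ↦ ?_⟩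
  have h₁ := min_le_sCount hk hS j
  have h₂ := sCount_le w j
  have h₃ := min_le_sCount hk hS i
  have h₄ := sCount_le w i
  simp only [mem_filter, mem_univ, true_and, mem_singleton, Fin.ext_iff]
  refine ⟨fun h ↦ by omega, fun h ↦ by rw [h]; omega⟩

lemma get_eq_true_of_card_sCount_fiber_le_one (hw : IsThresholdWord w)
    (h : ∀ i < k, #{j : Fin w.length | sCount w j = i} ≤ 1) (j : Fin w.length)
    (hj : (j : ℕ) < k) : w.get j = true := by
  by_contra hjD
  obtain ⟨q, -, hq, hqj⟩ := exists_le_get_eq_true_sCount_eq hw j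
  refine not_le.2 (one_lt_card.2 ⟨j, ?_, q, ?_, ?_⟩) (h _ ((sCount_le w j).trans_lt hj))
  · simp
  · simp [hqj]
  · rintro rfl
    exact hjD hq

theorem kConnected_thresholdGraph_iff (hw : IsThresholdWord w) (hk : k ≤ w.length) :
    KConnected (thresholdGraph w) k ↔ ∀ i < k, #{j : Fin w.length | sCount w j = i} = 1 :=
  ⟨fun h _ ↦ card_sCount_fiber_eq_one hk (get_eq_true_of_kConnected hw h),
    fun h ↦ kConnected_thresholdGraph_of_forall_get hk
      (get_eq_true_of_card_sCount_fiber_le_one hw fun i hi ↦ (h i hi).le)⟩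

end Connectivity

section Polynomial

variable {R : Type*}

lemma coeff_sum_C_mul_X_pow [Semiring R] {d : ℕ} (b : Fin d → R) (i : Fin d) :
    (∑ m : Fin d, C (b m) * X ^ (m : ℕ)).coeff i = b i := by
  simp [finsetSum_coeff, Fin.val_inj]

lemma sum_C_mul_X_sub_one_pow_injective [CommRing R] {d : ℕ} :
    Function.Injective fun b : Fin d → R ↦ ∑ m : Fin d, C (b m) * (X - 1) ^ (m : ℕ) := by
  intro b b' h
  have h' := congr_arg (aeval (X + 1 : R[X])) h
  simp only [map_sum, map_mul, map_pow, map_sub, aeval_X, aeval_C, algebraMap_eq, map_one,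
    add_sub_cancel_right] at h'
  funext i
  rw [← coeff_sum_C_mul_X_pow b, ← coeff_sum_C_mul_X_pow b', h']

lemma sum_choose_mul_X_sub_one_pow [CommRing R] {r d : ℕ} (h : r < d) :
    ∑ m : Fin d, C (r.choose m : R) * (X - 1) ^ (m : ℕ) = X ^ r := by
  rw [Fin.sum_univ_eq_sum_range (fun m ↦ C (r.choose m : R) * (X - 1) ^ m),
    ← sum_subset (range_subset_range.2 h) fun m _ hm ↦ by
      rw [Nat.choose_eq_zero_of_lt (by simpa using hm)]; simp]
  calc _ = ((X - 1 : R[X]) + 1) ^ r := by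
        rw [add_pow]; exact sum_congr rfl fun m _ ↦ by simp [mul_comm]
    _ = X ^ r := by rw [sub_add_cancel]

end Polynomial

section RankPoly

noncomputable def rankPoly (w : List Bool) : ℤ[X] := ∑ j : Fin w.length, X ^ sCount w j

variable {w : List Bool}

lemma coeff_rankPoly (i : ℕ) : (rankPoly w).coeff i = #{j : Fin w.length | sCount w j = i} := by
  simp [rankPoly, finsetSum_coeff, coeff_X_pow, eq_comm]

lemma eq_card_sCount_fiber_of_sum_eq_rankPoly {d : ℕ} {b : Fin d → ℤ}
    (h : ∑ m : Fin d, C (b m) * X ^ (m : ℕ) = rankPoly w) (i : Fin d) :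
    b i = #{j : Fin w.length | sCount w j = i} := by
  rw [← coeff_sum_C_mul_X_pow b, h, coeff_rankPoly]

lemma sum_cliqueCount_mul_X_sub_one_pow {d : ℕ} (hd : ∀ j : Fin w.length, sCount w j < d) :
    ∑ m : Fin d, C (cliqueCount (thresholdGraph w) (m + 1) : ℤ) * (X - 1) ^ (m : ℕ) =
      rankPoly w := by
  simp_rw [cliqueCount_thresholdGraph_succ, Nat.cast_sum, map_sum, sum_mul]
  rw [sum_comm]
  exact sum_congr rfl fun j _ ↦ sum_choose_mul_X_sub_one_pow (hd j)

lemma rankPoly_cons (x : Bool) : rankPoly (x :: w) = 1 + X ^ x.toNat * rankPoly w := by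
  simp [rankPoly, Fin.sum_univ_succ, sCount_cons_succ, pow_add, mul_sum]

lemma rankPoly_replicate_false_append (n : ℕ) :
    rankPoly (List.replicate n false ++ w) = n + rankPoly w := by
  induction n with
  | zero => simp
  | succ n ih =>
    rw [List.replicate_succ, List.cons_append, rankPoly_cons, ih, Bool.toNat_false, pow_zero,
      one_mul, Nat.cast_succ]
    ring

end RankPoly

section BlockWord

def blockWord : {d : ℕ} → (Fin d → ℕ) → List Bool
  | 0, _ => []
  | _ + 1, a => List.replicate (a 0 - 1) false ++ true :: blockWord (Fin.tail a)

lemma isThresholdWord_blockWord {d : ℕ} (a : Fin d → ℕ) : IsThresholdWord (blockWord a) := by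
  induction d with
  | zero => simp [IsThresholdWord, blockWord]
  | succ d ih =>
    intro _
    rw [blockWord, List.getLast?_append_of_ne_nil _ (List.cons_ne_nil _ _), List.getLast?_cons]
    rcases eq_or_ne (blockWord (Fin.tail a)) [] with h | h
    · simp [h]
    · simp [ih (Fin.tail a) h]

lemma sCount_length_replicate_false_append (w : List Bool) (n : ℕ) :
    sCount (List.replicate n false ++ w) (List.replicate n false ++ w).length =
      sCount w w.length := by
  induction n with
  | zero => rfl
  | succ n ih => simpa [List.replicate_succ, sCount_cons_succ] using ih

lemma sCount_length_blockWord {d : ℕ} (a : Fin d → ℕ) :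
    sCount (blockWord a) (blockWord a).length = d := by
  induction d with
  | zero => simp [blockWord]
  | succ d ih =>
    rw [blockWord, sCount_length_replicate_false_append, List.length_cons, sCount_cons_succ, ih,
      Bool.toNat_true, add_comm]

lemma rankPoly_blockWord {d : ℕ} {a : Fin d → ℕ} (ha : ∀ i, 0 < a i) :
    rankPoly (blockWord a) = ∑ i : Fin d, C (a i : ℤ) * X ^ (i : ℕ) := by
  induction d with
  | zero => exact Fin.sum_univ_zero _
  | succ d ih =>
    rw [blockWord, rankPoly_replicate_false_append, rankPoly_cons,
      ih (a := Fin.tail a) fun i ↦ ha i.succ, Fin.sum_univ_succ, Nat.cast_pred (ha 0)]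
    simp only [Fin.tail, Bool.toNat_true, mul_sum, mul_left_comm X, Fin.val_zero, pow_zero,
      mul_one, Fin.val_succ, pow_succ', map_natCast]
    ring

lemma exists_isThresholdWord_rankPoly_eq {d : ℕ} {b : Fin d → ℤ} (hb : ∀ i, 0 < b i) :
    ∃ w, IsThresholdWord w ∧ sCount w w.length = d ∧
      ∑ i : Fin d, C (b i) * X ^ (i : ℕ) = rankPoly w := by
  lift b to Fin d → ℕ using fun i ↦ (hb i).le
  exact ⟨blockWord b, isThresholdWord_blockWord b, sCount_length_blockWord b,
    (rankPoly_blockWord fun i ↦ Int.natCast_pos.1 (hb i)).symm⟩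

end BlockWord

theorem clique_vectors_of_kConnected_threshold_general (d k : ℕ) (hk : k ≤ d)
    (c : Fin d → ℕ) (b : Fin d → ℤ)
    (hb : ∑ i : Fin d, Polynomial.C (b i) * Polynomial.X ^ (i : ℕ) =
        ∑ i : Fin d, Polynomial.C ((c i : ℤ)) * (Polynomial.X - 1) ^ (i : ℕ)) :
    (∃ (n : ℕ) (G : SimpleGraph (Fin n)), IsThresholdGraph G ∧ KConnected G k ∧
        cliqueNum G = d ∧ ∀ i : Fin d, cliqueCount G ((i : ℕ) + 1) = c i) ↔
      (∀ i, 0 < b i) ∧ (∀ i : Fin d, (i : ℕ) < k → b i = 1) := by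
  constructor
  · rintro ⟨n, G, ⟨w, hw, ⟨e⟩⟩, hcon, hnum, hcount⟩
    have hd : sCount w w.length = d := by
      rw [← cliqueNum_thresholdGraph hw, ← e.cliqueNum_eq, hnum]
    have hfib := eq_card_sCount_fiber_of_sum_eq_rankPoly <| hb.trans <| by
      rw [← sum_cliqueCount_mul_X_sub_one_pow fun j ↦ (sCount_lt_sCount_length hw j).trans_eq hd]
      simp_rw [← e.cliqueCount_eq, hcount]
    refine ⟨fun i ↦ ?_, fun i hi ↦ ?_⟩
    · obtain ⟨j, hj⟩ := exists_sCount_eq (i.2.trans_eq hd.symm)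
      rw [hfib]
      exact_mod_cast card_pos.2 ⟨j, mem_filter.2 ⟨mem_univ _, hj⟩⟩
    · have hkw : k ≤ w.length := hk.trans (hd.symm.trans_le (sCount_le w w.length))
      rw [hfib, (kConnected_thresholdGraph_iff hw hkw).1 (hcon.of_iso e) i hi, Nat.cast_one]
  · rintro ⟨hbpos, hb1⟩
    obtain ⟨w, hw, hd, hpoly⟩ := exists_isThresholdWord_rankPoly_eq hbpos
    have hfib := eq_card_sCount_fiber_of_sum_eq_rankPoly hpoly
    refine ⟨_, thresholdGraph w, ⟨w, hw, ⟨.refl⟩⟩, ?_, ?_, fun i ↦ ?_⟩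
    · refine (kConnected_thresholdGraph_iff hw (hk.trans (hd.symm.trans_le (sCount_le w _)))).2
        fun i hi ↦ ?_
      exact_mod_cast (hfib ⟨i, hi.trans_le hk⟩).symm.trans (hb1 ⟨i, _⟩ hi)
    · rw [cliqueNum_thresholdGraph hw, hd]
    · have hc := sum_C_mul_X_sub_one_pow_injective <|
        (sum_cliqueCount_mul_X_sub_one_pow fun j ↦ (sCount_lt_sCount_length hw j).trans_eq hd).trans
          (hpoly.symm.trans hb)
      exact_mod_cast congr_fun hc i

/-- characterization of clique vectors of `k`-connected threshold
graphs. -/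
theorem clique_vectors_of_kConnected_threshold (d k : ℕ) (hk : k ≤ d)
    (c : Fin d → ℕ) (hc : ∀ i, 0 < c i) (b : Fin d → ℤ)
    (hb : ∑ i : Fin d, Polynomial.C (b i) * Polynomial.X ^ (i : ℕ) =
        ∑ i : Fin d, Polynomial.C ((c i : ℤ)) * (Polynomial.X - 1) ^ (i : ℕ)) :
    (∃ (n : ℕ) (G : SimpleGraph (Fin n)), IsThresholdGraph G ∧ KConnected G k ∧
        cliqueNum G = d ∧ ∀ i : Fin d, cliqueCount G ((i : ℕ) + 1) = c i) ↔
      (∀ i, 0 < b i) ∧ (∀ i : Fin d, (i : ℕ) < k → b i = 1) :=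
  clique_vectors_of_kConnected_threshold_general d k hk c b hb
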